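/- Fix integers α_1 > α_2 > ⋯ > α_N ≥ 1 and m_1, …, m_N ≥ 1, set n := Σ_r α_r m_r and F := ⊕_{r=1}^N E_{α_r}(I_{m_r}). Let B = ⊕_{r=1}^N T(B^r_0, …, B^r_{α_r−1}) and C = ⊕_{r=1}^N T(C^r_0, …, C^r_{α_r−1}), where each B^r_j, C^r_j ∈ ℂ^{m_r×m_r} is symmetric and B^r_0, C^r_0 are invertible. If X has form (0T0) with diagonal-block leading Toeplitz coefficients A^{rr}_0, and C = F Xᵀ F B X, then for every r = 1, …, N one has C^r_0 = (A^{rr}_0)ᵀ B^r_0 A^{rr}_0. -/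

import Mathlib

/-!
`F` is the permutation matrix of the involution `σ` reversing the level index inside each
block, so `F Xᵀ F = (X.submatrix σ σ)ᵀ` and the leading `(r, r)` entry-block of `C` is
`∑_w X (σ w) (σ u) * (B X) w v`. The (0T0) shape puts the level-`0` column `v` of `X` on
level-`0` rows of the blocks `s` with `α s ≥ α r`, and the upper-triangular `B` keeps that
support. For `α s > α r` the factor `X (σ w) (σ u)` sits at levels `(α s - 1, α r - 1)`, below
the top-right-aligned band, so only `s = r` survives; there `X` contributes its constant
diagonal coefficient `A^{rr}_0` on both sides.
-/

open Matrix

noncomputable section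

/-- Form (0T0): block matrix partitioned by Jordan structure `(α, m)` whose `(r,s)` block,
viewed as an `α r × α s` array of `m r × m s` blocks, is a rectangular block
upper-triangular Toeplitz matrix aligned to the top-right corner. -/
def IsForm0T0 {N : ℕ} (α m : Fin N → ℕ)
    (X : Matrix (Σ r : Fin N, Fin (α r) × Fin (m r)) (Σ r : Fin N, Fin (α r) × Fin (m r)) ℂ) :
    Prop :=
  ∃ A : ∀ r s : Fin N, ℕ → Matrix (Fin (m r)) (Fin (m s)) ℂ,
    ∀ (r s : Fin N) (i : Fin (α r)) (j : Fin (α s)) (a : Fin (m r)) (b : Fin (m s)),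
      X ⟨r, (i, a)⟩ ⟨s, (j, b)⟩ =
        if (i : ℕ) + (α s - min (α r) (α s)) ≤ (j : ℕ) then
          A r s ((j : ℕ) - (i : ℕ) - (α s - min (α r) (α s))) a b
        else 0

/-- `E_b(I_m)`: the `bm × bm` block matrix with `I_m` on the block anti-diagonal. -/
def revE (b m : ℕ) : Matrix (Fin b × Fin m) (Fin b × Fin m) ℂ :=
  Matrix.of fun p q => if (p.1 : ℕ) + (q.1 : ℕ) + 1 = b ∧ p.2 = q.2 then 1 else 0

/-- `F = ⊕_r E_{α r}(I_{m r})`. -/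
def bigF {N : ℕ} (α m : Fin N → ℕ) :
    Matrix (Σ r : Fin N, Fin (α r) × Fin (m r)) (Σ r : Fin N, Fin (α r) × Fin (m r)) ℂ :=
  Matrix.blockDiagonal' fun r => revE (α r) (m r)

/-- The `n × n` upper-triangular Jordan block `J_n(λ)`. -/
def Jmat (n : ℕ) (lam : ℂ) : Matrix (Fin n) (Fin n) ℂ :=
  Matrix.of fun i j => if (j : ℕ) = (i : ℕ) then lam else if (j : ℕ) = (i : ℕ) + 1 then 1 else 0

/-- The `n × n` backward identity matrix `E_n`. -/
def ErevC (n : ℕ) : Matrix (Fin n) (Fin n) ℂ :=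
  Matrix.of fun i j => if (i : ℕ) + (j : ℕ) + 1 = n then 1 else 0

/-- `P_n = (1/√2)(I + i E_n)`. -/
noncomputable def Pmat (n : ℕ) : Matrix (Fin n) (Fin n) ℂ :=
  (Real.sqrt 2 : ℂ)⁻¹ • (1 + Complex.I • ErevC n)

/-- `P_n⁻¹ = (1/√2)(I − i E_n)`. -/
noncomputable def PmatInv (n : ℕ) : Matrix (Fin n) (Fin n) ℂ :=
  (Real.sqrt 2 : ℂ)⁻¹ • (1 - Complex.I • ErevC n)

/-- The symmetric canonical form `K_n(λ) = P_n J_n(λ) P_n⁻¹` of a Jordan block. -/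
noncomputable def Kmat (n : ℕ) (lam : ℂ) : Matrix (Fin n) (Fin n) ℂ :=
  Pmat n * Jmat n lam * PmatInv n

/-- `T(A_0, …)`: the `β × β` block upper-triangular Toeplitz matrix with blocks `A_j`. -/
def blkToeplitz (β p q : ℕ) (A : ℕ → Matrix (Fin p) (Fin q) ℂ) :
    Matrix (Fin β × Fin p) (Fin β × Fin q) ℂ :=
  Matrix.of fun x y =>
    if (x.1 : ℕ) ≤ (y.1 : ℕ) then A ((y.1 : ℕ) - (x.1 : ℕ)) x.2 y.2 else 0

/-- The `(i,i)`-th `m r × m r` entry-block of the `(r,r)` diagonal block of `X`; for a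
matrix of form (0T0) this is the leading Toeplitz coefficient `A^{rr}_0`. -/
def diagLead {N : ℕ} (α m : Fin N → ℕ)
    (X : Matrix (Σ r : Fin N, Fin (α r) × Fin (m r)) (Σ r : Fin N, Fin (α r) × Fin (m r)) ℂ)
    (r : Fin N) (i : Fin (α r)) : Matrix (Fin (m r)) (Fin (m r)) ℂ :=
  Matrix.of fun a b => X ⟨r, (i, a)⟩ ⟨r, (i, b)⟩

/-- The space of skew-symmetric matrices commuting with `S`. -/
def skewCommSubmodule (ι : Type*) [Fintype ι] [DecidableEq ι] (S : Matrix ι ι ℂ) :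
    Submodule ℂ (Matrix ι ι ℂ) where
  carrier := {X | Xᵀ = -X ∧ X * S = S * X}
  add_mem' := by
    rintro a b ⟨ha1, ha2⟩ ⟨hb1, hb2⟩
    refine ⟨?_, ?_⟩
    · rw [Matrix.transpose_add, ha1, hb1, neg_add]
    · rw [add_mul, mul_add, ha2, hb2]
  zero_mem' := by
    refine ⟨?_, ?_⟩
    · simp
    · simp
  smul_mem' := by
    rintro c a ⟨h1, h2⟩
    refine ⟨?_, ?_⟩
    · rw [Matrix.transpose_smul, h1, smul_neg]
    · rw [Matrix.smul_mul, Matrix.mul_smul, h2]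

/-- The isotropy group (as a set) of `S` under orthogonal similarity. -/
def sigmaSet {ι : Type*} [Fintype ι] [DecidableEq ι] (S : Matrix ι ι ℂ) : Set (Matrix ι ι ℂ) :=
  {Q | Qᵀ * Q = 1 ∧ Qᵀ * S * Q = S}

section LevelReversal

variable {N : ℕ} (α m : Fin N → ℕ)

def levelRev : Equiv.Perm (Σ r : Fin N, Fin (α r) × Fin (m r)) :=
  Equiv.sigmaCongrRight fun _ => Equiv.prodCongr Fin.revPerm (Equiv.refl _)

@[simp]
lemma levelRev_apply (r : Fin N) (i : Fin (α r)) (a : Fin (m r)) :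
    levelRev α m ⟨r, (i, a)⟩ = ⟨r, (i.rev, a)⟩ := rfl

lemma levelRev_symm : (levelRev α m).symm = levelRev α m := by
  ext x
  · rfl
  · simp [levelRev]

lemma bigF_eq_toMatrix : bigF α m = (levelRev α m).toPEquiv.toMatrix := by
  ext ⟨r, i, a⟩ ⟨s, j, b⟩
  rw [PEquiv.toMatrix_toPEquiv_apply, levelRev_apply, Pi.single_apply]
  by_cases hrs : r = s
  · subst hrs
    have hrev : j = i.rev ↔ α r = i + j + 1 := by rw [Fin.ext_iff, Fin.val_rev]; omega
    simp [bigF, revE, Matrix.blockDiagonal'_apply_eq, eq_comm, hrev]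
  · rw [bigF, Matrix.blockDiagonal'_apply_ne _ _ _ hrs,
      if_neg fun h => hrs (congrArg Sigma.fst h).symm]

lemma bigF_mul_transpose_mul_bigF
    (Y : Matrix (Σ r : Fin N, Fin (α r) × Fin (m r)) (Σ r : Fin N, Fin (α r) × Fin (m r)) ℂ) :
    bigF α m * Yᵀ * bigF α m = (Y.submatrix (levelRev α m) (levelRev α m))ᵀ := by
  rw [bigF_eq_toMatrix, PEquiv.toMatrix_toPEquiv_mul, PEquiv.mul_toMatrix_toPEquiv, levelRev_symm]
  rfl

end LevelReversal

lemma blockDiagonal'_blkToeplitz_mul_apply_of_level_zero {N : ℕ} {α m : Fin N → ℕ}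
    (B : ∀ r : Fin N, ℕ → Matrix (Fin (m r)) (Fin (m r)) ℂ) {κ : Type*}
    (Y : Matrix (Σ r : Fin N, Fin (α r) × Fin (m r)) κ ℂ) (v : κ)
    (hY : ∀ s (k : Fin (α s)) d, (k : ℕ) ≠ 0 → Y ⟨s, (k, d)⟩ v = 0)
    (s : Fin N) (k : Fin (α s)) (c : Fin (m s)) :
    ((Matrix.blockDiagonal' fun r => blkToeplitz (α r) (m r) (m r) (B r)) * Y) ⟨s, (k, c)⟩ v =
      ∑ d, B s 0 c d * Y ⟨s, (k, d)⟩ v := by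
  rw [Matrix.mul_apply, Fintype.sum_sigma, Finset.sum_eq_single s]
  · rw [Fintype.sum_prod_type, Finset.sum_eq_single k]
    · simp [blkToeplitz]
    · intro k' _ hk'
      refine Finset.sum_eq_zero fun d _ => ?_
      simp only [Matrix.blockDiagonal'_apply_eq, blkToeplitz, Matrix.of_apply]
      split_ifs with hkk'
      · rw [hY s k' d (by omega), mul_zero]
      · rw [zero_mul]
    · simp
  · intro s' _ hs'
    refine Finset.sum_eq_zero fun x _ => ?_
    rw [Matrix.blockDiagonal'_apply_ne _ _ _ (Ne.symm hs'), zero_mul]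
  · simp

section Form0T0

variable {N : ℕ} {α m : Fin N → ℕ}
  {X : Matrix (Σ r : Fin N, Fin (α r) × Fin (m r)) (Σ r : Fin N, Fin (α r) × Fin (m r)) ℂ}

lemma IsForm0T0.apply_eq_zero (hX : IsForm0T0 α m X) {r s : Fin N} {i : Fin (α r)}
    {j : Fin (α s)} (h : (j : ℕ) < i + (α s - min (α r) (α s))) (a : Fin (m r))
    (b : Fin (m s)) : X ⟨r, (i, a)⟩ ⟨s, (j, b)⟩ = 0 := by
  obtain ⟨A, hA⟩ := hX
  rw [hA, if_neg h.not_ge]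

lemma IsForm0T0.diagLead_eq (hX : IsForm0T0 α m X) (r : Fin N) (i j : Fin (α r)) :
    diagLead α m X r i = diagLead α m X r j := by
  obtain ⟨A, hA⟩ := hX
  ext a b
  simp [diagLead, hA]

lemma IsForm0T0.transpose_submatrix_levelRev_mul_apply
    (hX : IsForm0T0 α m X) (hα : Function.Injective α)
    (B : ∀ r : Fin N, ℕ → Matrix (Fin (m r)) (Fin (m r)) ℂ)
    (r : Fin N) (i₀ : Fin (α r)) (hi₀ : (i₀ : ℕ) = 0) (a b : Fin (m r)) :
    ((X.submatrix (levelRev α m) (levelRev α m))ᵀ *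
        ((Matrix.blockDiagonal' fun r => blkToeplitz (α r) (m r) (m r) (B r)) * X))
        ⟨r, (i₀, a)⟩ ⟨r, (i₀, b)⟩ =
      ((diagLead α m X r i₀)ᵀ * B r 0 * diagLead α m X r i₀) a b := by
  have hcol : ∀ s (k : Fin (α s)) d, ((k : ℕ) ≠ 0 ∨ α s < α r) →
      X ⟨s, (k, d)⟩ ⟨r, (i₀, b)⟩ = 0 :=
    fun s k d hk => hX.apply_eq_zero (by omega) d b
  have hBX := blockDiagonal'_blkToeplitz_mul_apply_of_level_zero B X ⟨r, (i₀, b)⟩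
    fun s k d hk => hcol s k d (Or.inl hk)
  have hBX_zero : ∀ s (k : Fin (α s)) c, ((k : ℕ) ≠ 0 ∨ α s < α r) →
      ((Matrix.blockDiagonal' fun r => blkToeplitz (α r) (m r) (m r) (B r)) * X)
        ⟨s, (k, c)⟩ ⟨r, (i₀, b)⟩ = 0 := fun s k c h => by
    rw [hBX]
    exact Finset.sum_eq_zero fun d _ => by rw [hcol s k d h, mul_zero]
  rw [Matrix.mul_apply, Fintype.sum_sigma, Finset.sum_eq_single r]
  · rw [Fintype.sum_prod_type, Finset.sum_eq_single i₀]
    · have hlead : ∀ c a, X ⟨r, (i₀.rev, c)⟩ ⟨r, (i₀.rev, a)⟩ = diagLead α m X r i₀ c a :=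
        fun c a => congrFun (congrFun (hX.diagLead_eq r _ _) c) a
      simp only [Matrix.transpose_apply, Matrix.submatrix_apply, levelRev_apply, hBX, hlead,
        Matrix.mul_apply, Finset.mul_sum, Finset.sum_mul, mul_assoc]
      exact Finset.sum_comm
    · intro k _ hk
      refine Finset.sum_eq_zero fun c _ => ?_
      rw [hBX_zero r k c (Or.inl fun h => hk (Fin.ext (h.trans hi₀.symm))), mul_zero]
    · simp
  · intro s _ hs
    refine Finset.sum_eq_zero fun ⟨k, c⟩ _ => ?_
    by_cases hsmall : (k : ℕ) ≠ 0 ∨ α s < α r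
    · rw [hBX_zero s k c hsmall, mul_zero]
    · have hrs : α r < α s := ((hα.ne hs).lt_or_gt.resolve_left (by tauto))
      have hrev : (i₀.rev : ℕ) < k.rev + (α r - min (α s) (α r)) := by
        rw [Fin.val_rev, Fin.val_rev, min_eq_right hrs.le]
        omega
      rw [Matrix.transpose_apply, Matrix.submatrix_apply, levelRev_apply, levelRev_apply,
        hX.apply_eq_zero hrev, zero_mul]
  · simp

end Form0T0

theorem stmt10 (N : ℕ) (α m : Fin N → ℕ)
    (hαa : StrictAnti α) (hα1 : ∀ r, 0 < α r)
    (B C : ∀ r : Fin N, ℕ → Matrix (Fin (m r)) (Fin (m r)) ℂ)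
    (X : Matrix (Σ r : Fin N, Fin (α r) × Fin (m r))
      (Σ r : Fin N, Fin (α r) × Fin (m r)) ℂ)
    (hX : IsForm0T0 α m X)
    (heq : (Matrix.blockDiagonal' fun r => blkToeplitz (α r) (m r) (m r) (C r)) =
      bigF α m * Xᵀ * bigF α m *
        (Matrix.blockDiagonal' fun r => blkToeplitz (α r) (m r) (m r) (B r)) * X) :
    ∀ r : Fin N,
      C r 0 = (diagLead α m X r ⟨0, hα1 r⟩)ᵀ * B r 0 * diagLead α m X r ⟨0, hα1 r⟩ := by
  intro r
  ext a b
  have hC : C r 0 a b = (Matrix.blockDiagonal' fun r => blkToeplitz (α r) (m r) (m r) (C r))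
      ⟨r, (⟨0, hα1 r⟩, a)⟩ ⟨r, (⟨0, hα1 r⟩, b)⟩ := by
    simp [blkToeplitz]
  rw [hC, heq, Matrix.mul_assoc, bigF_mul_transpose_mul_bigF]
  exact hX.transpose_submatrix_levelRev_mul_apply hαa.injective B r _ rfl a b
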